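/- arXiv:1205.6741 — 3 statements merged into one kernel-verified Lean document; each statement's English description precedes it below -/
import Mathlib

section
/- Let γ ∈ (0,1) and ξ ∈ (0,∞). Let K : [0,∞) → ℝ be Lipschitz continuous, bounded and nonnegative. For each T ∈ ℕ, T ≥ 1, let h = h_T > 0 satisfy |T/h − ξ| ≤ C₀/T for a constant C₀ not depending on T. Define N_T(w) = T^{-1} ∑_{j=⌊Tγ⌋}^{⌊Tw⌋−1} K((⌊Tw⌋ − j)/h) and N(w) = ∫_γ^w K(ξ(w−z)) dz for w ∈ [γ,1]. Then there exists a constant C (depending only on K, ξ, γ and C₀) such that for all T ≥ 1, sup_{w ∈ [γ,1]} |N_T(w) − N(w)| ≤ C/T. -/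
/-!
Cover `[⌊Tγ⌋/T, ⌊Tw⌋/T]` by the grid cells `[j/T, (j+1)/T]`, `⌊Tγ⌋ ≤ j < ⌊Tw⌋`; the two
leftover pieces `[⌊Tγ⌋/T, γ]` and `[⌊Tw⌋/T, w]` have length at most `1/T`, so they cost at most
`2 sup K / T`. For `z` in the cell of `j`, `⌊Tw⌋ - j` is within `1` of `T(w - z)` and
`|T/h - ξ| ≤ C₀/T`, so `(⌊Tw⌋ - j)/h` is within `(ξ + C₀)/T` of `ξ(w - z)`. By the Lipschitz
bound each of the at most `T` cells contributes an error `L(ξ + C₀)/T²`.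
-/

open MeasureTheory

theorem nat_floor_mul_div_le {t x : ℝ} (ht : 0 < t) (hx : 0 ≤ x) : (⌊t * x⌋₊ : ℝ) / t ≤ x := by
  rw [div_le_iff₀ ht, mul_comm x]
  exact Nat.floor_le (by positivity)

theorem sub_nat_floor_mul_div_lt {t x : ℝ} (ht : 0 < t) : x - (⌊t * x⌋₊ : ℝ) / t < 1 / t := by
  have := Nat.lt_floor_add_one (t * x)
  rw [sub_lt_iff_lt_add, ← add_div, lt_div_iff₀ ht]
  linarith

theorem abs_intervalIntegral_le_of_abs_le {f : ℝ → ℝ} {x y M : ℝ} (hxy : x ≤ y)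
    (hf : ∀ z ∈ Set.Ioc x y, |f z| ≤ M) : |∫ z in x..y, f z| ≤ M * (y - x) := by
  have h := intervalIntegral.norm_integral_le_of_norm_le_const (f := f) (C := M) fun z hz =>
    (Real.norm_eq_abs _).trans_le (hf z (by rwa [Set.uIoc_of_le hxy] at hz))
  rwa [Real.norm_eq_abs, abs_of_nonneg (sub_nonneg.2 hxy)] at h

theorem abs_integral_nat_floor_mul_div_le {f : ℝ → ℝ} {t x M : ℝ} (ht : 0 < t) (hx : 0 ≤ x)
    (hM : 0 ≤ M) (hf : ∀ z ∈ Set.Ioc ((⌊t * x⌋₊ : ℝ) / t) x, |f z| ≤ M) :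
    |∫ z in (⌊t * x⌋₊ : ℝ) / t..x, f z| ≤ M / t :=
  calc _ ≤ M * (x - ⌊t * x⌋₊ / t) :=
        abs_intervalIntegral_le_of_abs_le (nat_floor_mul_div_le ht hx) hf
    _ ≤ M * (1 / t) := mul_le_mul_of_nonneg_left (sub_nat_floor_mul_div_lt ht).le hM
    _ = M / t := mul_one_div M t

theorem abs_mul_sub_intervalIntegral_le {f : ℝ → ℝ} {x y c ε : ℝ} (hxy : x ≤ y)
    (hf : IntervalIntegrable f volume x y) (hc : ∀ z ∈ Set.Ioc x y, |c - f z| ≤ ε) :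
    |c * (y - x) - ∫ z in x..y, f z| ≤ ε * (y - x) := by
  have hconst : c * (y - x) = ∫ _ in x..y, c := by
    rw [intervalIntegral.integral_const, smul_eq_mul, mul_comm]
  rw [hconst, ← intervalIntegral.integral_sub intervalIntegrable_const hf]
  exact abs_intervalIntegral_le_of_abs_le hxy hc

theorem abs_sum_div_sub_intervalIntegral_le {f : ℝ → ℝ} {g : ℕ → ℝ} {t ε : ℝ} {m n : ℕ}
    (ht : 0 < t) (hmn : m ≤ n) (hf : IntervalIntegrable f volume (m / t) (n / t))
    (hg : ∀ j ∈ Finset.Ico m n, ∀ z ∈ Set.Ioc ((j : ℝ) / t) ((j + 1) / t), |g j - f z| ≤ ε) :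
    |(∑ j ∈ Finset.Ico m n, g j) / t - ∫ z in (m : ℝ) / t..n / t, f z| ≤ ε * (n - m) / t := by
  have hcell : ∀ j ∈ Finset.Ico m n, IntervalIntegrable f volume ((j : ℝ) / t) ((j + 1) / t) := by
    intro j hj
    rw [Finset.mem_Ico] at hj
    refine hf.mono_set ?_
    rw [Set.uIcc_of_le (by gcongr; linarith), Set.uIcc_of_le (by gcongr)]
    exact Set.Icc_subset_Icc (by gcongr; exact_mod_cast hj.1) (by gcongr; exact_mod_cast hj.2)
  rw [← intervalIntegral.sum_integral_adjacent_intervals_Ico (a := fun j : ℕ => (j : ℝ) / t) hmn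
    fun j hj => by exact_mod_cast hcell j (Finset.mem_Ico.2 hj), Finset.sum_div,
    ← Finset.sum_sub_distrib]
  calc _ ≤ ∑ j ∈ Finset.Ico m n, |g j / t - ∫ z in (j : ℝ) / t..(j + 1 : ℕ) / t, f z| :=
        Finset.abs_sum_le_sum_abs _ _
    _ ≤ ∑ j ∈ Finset.Ico m n, ε * (1 / t) := by
        refine Finset.sum_le_sum fun j hj => ?_
        have hwidth : ((j : ℝ) + 1) / t - j / t = 1 / t := by ring
        have h := abs_mul_sub_intervalIntegral_le (by gcongr; linarith) (hcell j hj) (hg j hj)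
        rw [hwidth, mul_one_div] at h
        exact_mod_cast h
    _ = ε * (n - m) / t := by
        rw [Finset.sum_const, Nat.card_Ico, nsmul_eq_mul, Nat.cast_sub hmn]
        ring

theorem abs_div_sub_mul_le {t h ξ C₀ d s : ℝ} (ht : 0 < t) (hξ : 0 ≤ ξ)
    (hrate : |t / h - ξ| ≤ C₀ / t) (hd : |d| ≤ t) (hds : |d - t * s| ≤ 1) :
    |d / h - ξ * s| ≤ (ξ + C₀) / t := by
  have hsplit : d / h - ξ * s = (d * (t / h - ξ) + ξ * (d - t * s)) / t := by
    field_simp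
    ring
  rw [hsplit, abs_div, abs_of_pos ht]
  gcongr
  calc |d * (t / h - ξ) + ξ * (d - t * s)|
      ≤ |d| * |t / h - ξ| + ξ * |d - t * s| :=
        (abs_add_le _ _).trans_eq (by rw [abs_mul, abs_mul, abs_of_nonneg hξ])
    _ ≤ t * (C₀ / t) + ξ * 1 := by gcongr
    _ = ξ + C₀ := by field_simp; ring

section Kernel

variable {K : ℝ → ℝ} {L : NNReal} {ξ C₀ t h : ℝ}

theorem abs_kernel_div_sub_kernel_mul_le (hK : LipschitzOnWith L K (Set.Ici 0)) (hξ : 0 ≤ ξ)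
    (ht : 0 < t) (hh : 0 < h) (hrate : |t / h - ξ| ≤ C₀ / t) {d s : ℝ} (hd0 : 0 ≤ d) (hdt : d ≤ t)
    (hs : 0 ≤ s) (hds : |d - t * s| ≤ 1) :
    |K (d / h) - K (ξ * s)| ≤ L * (ξ + C₀) / t := by
  have h := hK.dist_le_mul (d / h) (div_nonneg hd0 hh.le) (ξ * s) (mul_nonneg hξ hs)
  rw [Real.dist_eq, Real.dist_eq] at h
  rw [mul_div_assoc]
  exact h.trans (by gcongr; exact abs_div_sub_mul_le ht hξ hrate (abs_le.2 ⟨by linarith, hdt⟩) hds)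

theorem intervalIntegrable_comp_mul_sub (hK : ContinuousOn K (Set.Ici 0)) (hξ : 0 ≤ ξ)
    {w x y : ℝ} (hx : x ≤ w) (hy : y ≤ w) :
    IntervalIntegrable (fun z => K (ξ * (w - z))) volume x y := by
  refine ContinuousOn.intervalIntegrable (hK.comp (by fun_prop) fun z hz => ?_)
  have : z ≤ w := (Set.mem_uIcc.1 hz).elim (fun h => h.2.trans hy) (fun h => h.2.trans hx)
  exact mul_nonneg hξ (sub_nonneg.2 this)

theorem abs_kernelSum_sub_intervalIntegral_le (hK : LipschitzOnWith L K (Set.Ici 0)) (hξ : 0 ≤ ξ)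
    (ht : 0 < t) (hh : 0 < h) (hrate : |t / h - ξ| ≤ C₀ / t) {m : ℕ} {w : ℝ} (hw0 : 0 ≤ w)
    (hw1 : w ≤ 1) (hm : m ≤ ⌊t * w⌋₊) :
    |(∑ j ∈ Finset.Ico m ⌊t * w⌋₊, K ((⌊t * w⌋₊ - j : ℝ) / h)) / t
      - ∫ z in (m : ℝ) / t..⌊t * w⌋₊ / t, K (ξ * (w - z))| ≤ L * (ξ + C₀) / t := by
  set n := ⌊t * w⌋₊
  have hn : (n : ℝ) ≤ t * w := Nat.floor_le (by positivity)
  have hn' : t * w < n + 1 := Nat.lt_floor_add_one _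
  have hnw : (n : ℝ) / t ≤ w := nat_floor_mul_div_le ht hw0
  have hmn : (m : ℝ) ≤ n := by exact_mod_cast hm
  have hnt : (n : ℝ) ≤ t := hn.trans (mul_le_of_le_one_right ht.le hw1)
  have hC₀ : 0 ≤ C₀ := by simpa using (le_div_iff₀ ht).1 ((abs_nonneg _).trans hrate)
  have hint := intervalIntegrable_comp_mul_sub hK.continuousOn hξ
    ((div_le_div_of_nonneg_right hmn ht.le).trans hnw) hnw
  calc _ ≤ L * (ξ + C₀) / t * (n - m) / t :=
        abs_sum_div_sub_intervalIntegral_le ht hm hint fun j hj z hz => ?_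
    _ ≤ L * (ξ + C₀) / t * t / t := by gcongr; linarith [(m.cast_nonneg : (0 : ℝ) ≤ m)]
    _ = L * (ξ + C₀) / t := by field_simp
  rw [Finset.mem_Ico] at hj
  have hjn : (j : ℝ) + 1 ≤ n := by exact_mod_cast hj.2
  have hjz : (j : ℝ) < t * z := by rw [← div_lt_iff₀' ht]; exact hz.1
  have hzj : t * z ≤ j + 1 := by rw [← le_div_iff₀' ht]; exact hz.2
  have hzw : z ≤ w := hz.2.trans ((div_le_div_of_nonneg_right hjn ht.le).trans hnw)
  exact abs_kernel_div_sub_kernel_mul_le hK hξ ht hh hrate (by linarith)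
    (by linarith [j.cast_nonneg (α := ℝ)]) (sub_nonneg.2 hzw)
    (abs_le.2 ⟨by linarith, by linarith⟩)

end Kernel

theorem stmt_2_general
    (γ ξ : ℝ) (hγ : γ ∈ Set.Ioo (0:ℝ) 1) (hξ : 0 < ξ)
    (K : ℝ → ℝ) (L : NNReal) (hKLip : LipschitzOnWith L K (Set.Ici 0))
    (MK : ℝ) (hKbd : ∀ x ≥ (0:ℝ), |K x| ≤ MK)
    (h : ℕ → ℝ) (hhpos : ∀ T : ℕ, 1 ≤ T → 0 < h T)
    (C₀ : ℝ) (hrate : ∀ T : ℕ, 1 ≤ T → |(T : ℝ) / h T - ξ| ≤ C₀ / T) :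
    ∃ C : ℝ, ∀ T : ℕ, 1 ≤ T → ∀ w ∈ Set.Icc γ 1,
      |(∑ j ∈ Finset.Ico ⌊(T : ℝ) * γ⌋₊ ⌊(T : ℝ) * w⌋₊,
          K (((⌊(T : ℝ) * w⌋₊ : ℝ) - (j : ℝ)) / h T)) / T
        - ∫ z in γ..w, K (ξ * (w - z))| ≤ C / T := by
  have hMK : 0 ≤ MK := (abs_nonneg _).trans (hKbd 0 le_rfl)
  refine ⟨L * (ξ + C₀) + 2 * MK, fun T hT w ⟨hγw, hw1⟩ => ?_⟩
  have ht : (0 : ℝ) < T := by exact_mod_cast hT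
  have hw0 : 0 ≤ w := hγ.1.le.trans hγw
  have hγ_le := nat_floor_mul_div_le ht hγ.1.le
  have hw_le := nat_floor_mul_div_le ht hw0
  have hint {x y : ℝ} (hx : x ≤ w) (hy : y ≤ w) :=
    intervalIntegrable_comp_mul_sub hKLip.continuousOn hξ.le hx hy
  have hKw : ∀ z ≤ w, |K (ξ * (w - z))| ≤ MK := fun z hz =>
    hKbd _ (mul_nonneg hξ.le (sub_nonneg.2 hz))
  have hsplit := intervalIntegral.integral_interval_sub_interval_comm
    (hint (hγ_le.trans hγw) hw_le) (hint hγw le_rfl) (hint (hγ_le.trans hγw) hγw)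
  have hmain := abs_kernelSum_sub_intervalIntegral_le hKLip hξ.le ht (hhpos T hT) (hrate T hT) hw0
    hw1 (Nat.floor_le_floor (mul_le_mul_of_nonneg_left hγw ht.le))
  have hleft := abs_integral_nat_floor_mul_div_le ht hγ.1.le hMK fun z hz => hKw z (hz.2.trans hγw)
  have hright := abs_integral_nat_floor_mul_div_le ht hw0 hMK fun z hz => hKw z hz.2
  rw [show (L * (ξ + C₀) + 2 * MK) / T = L * (ξ + C₀) / T + MK / T + MK / T by ring]
  rw [abs_le] at hmain hleft hright ⊢
  constructor <;> linarith

/-- Uniform convergence at rate `1/T` of the Riemann-sum normalizer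
`N_T(w) = T⁻¹ ∑_{j=⌊Tγ⌋}^{⌊Tw⌋-1} K((⌊Tw⌋ - j)/h)` of the kernel prediction smoother to its
continuum limit `N(w) = ∫_γ^w K(ξ(w-z)) dz`, for a Lipschitz, bounded, nonnegative kernel `K`
and a bandwidth `h = h_T` with `|T/h - ξ| ≤ C₀/T`. -/
theorem stmt_2
    (γ ξ : ℝ) (hγ : γ ∈ Set.Ioo (0:ℝ) 1) (hξ : 0 < ξ)
    (K : ℝ → ℝ) (L : NNReal) (hKLip : LipschitzOnWith L K (Set.Ici 0))
    (MK : ℝ) (hKbd : ∀ x ≥ (0:ℝ), |K x| ≤ MK)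
    (hKnn : ∀ x ≥ (0:ℝ), 0 ≤ K x)
    (h : ℕ → ℝ) (hhpos : ∀ T : ℕ, 1 ≤ T → 0 < h T)
    (C₀ : ℝ) (hrate : ∀ T : ℕ, 1 ≤ T → |(T : ℝ) / h T - ξ| ≤ C₀ / T) :
    ∃ C : ℝ, ∀ T : ℕ, 1 ≤ T → ∀ w ∈ Set.Icc γ 1,
      |(∑ j ∈ Finset.Ico ⌊(T : ℝ) * γ⌋₊ ⌊(T : ℝ) * w⌋₊,
          K (((⌊(T : ℝ) * w⌋₊ : ℝ) - (j : ℝ)) / h T)) / T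
        - ∫ z in γ..w, K (ξ * (w - z))| ≤ C / T :=
  stmt_2_general γ ξ hγ hξ K L hKLip MK hKbd h hhpos C₀ hrate
end

section
/- In the setting of the previous statement (K Lipschitz, bounded, strictly positive; h = h_T with |T/h − ξ| ≤ C₀/T; D(u,v,w) = K(w−u)K(w−v)·1{0 ≤ u,v ≤ w}; N_T(w) = T^{-1} ∑_{j=⌊Tγ⌋}^{⌊Tw⌋−1} K((⌊Tw⌋−j)/h); g_T^{v,s}(u) = ∫_{⌊Ts₀⌋/T}^{⌊Ts⌋/T} D(uT/h, vT/h, ⌊Tw⌋/h) N_T(w)^{-2} dw), assume additionally that there is c > 0 with N_T(w) ≥ c for all w ∈ [s₀,1] and all sufficiently large T. Then the total variations of the functions u ↦ g_T^{v,s}(u) on [γ,1] are uniformly bounded: sup_{s ∈ [s₀,1]} sup_{v ∈ [γ,1]} sup_{T} V(g_T^{v,s}; [γ,1]) < ∞, where V(f;[γ,1]) = sup over partitions γ = ξ_0 < ξ_1 < ⋯ < ξ_m = 1 of ∑_i |f(ξ_{i+1}) − f(ξ_i)|. -/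
/-!
For fixed `w`, the integrand `u ↦ D(uT/h, vT/h, ⌊Tw⌋/h) N_T(w)⁻²` vanishes for `u > ⌊Tw⌋/T`
and below that threshold is Lipschitz in `u` with constant `L (T/h) sup|K| N_T(w)⁻²`, so its
variation on `[γ,1]` is at most that constant times `1 - γ` plus a single jump of size
`sup|K|² N_T(w)⁻²`. The variation of an integral is at most the integral of the variations, and
both constants are uniform: `T/h ≤ ξ + C₀` by the bandwidth rate, while `N_T(w)⁻² ≤ c⁻²` for large
`T` (on `(⌊Ts₀⌋/T, s₀)` the normalizer equals `N_T(s₀)`) and, for each of the finitely many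
remaining `T`, `N_T` takes only finitely many values on `[0,1]` since it depends on `w` only
through `⌊Tw⌋`.
-/

open MeasureTheory Set

section Variation

variable {α : Type*} [LinearOrder α]

theorem eVariationOn_le_of_edist_le {E F : Type*} [PseudoEMetricSpace E] [PseudoEMetricSpace F]
    {f : α → E} {g : α → F} {s : Set α}
    (h : ∀ x ∈ s, ∀ y ∈ s, x ≤ y → edist (f y) (f x) ≤ edist (g y) (g x)) :
    eVariationOn f s ≤ eVariationOn g s := by
  refine iSup_le fun ⟨n, u, hu, us⟩ => ?_
  calc ∑ i ∈ Finset.range n, edist (f (u (i + 1))) (f (u i))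
      ≤ ∑ i ∈ Finset.range n, edist (g (u (i + 1))) (g (u i)) :=
        Finset.sum_le_sum fun i _ => h _ (us i) _ (us (i + 1)) (hu i.le_succ)
    _ ≤ eVariationOn g s := eVariationOn.sum_le hu us

variable {E : Type*} [NormedAddCommGroup E] [NormedSpace ℝ E]

theorem eVariationOn_integral_le {ι : Type*} [MeasurableSpace ι] {μ : Measure ι}
    {F : α → ι → E} {s : Set α} (hF : ∀ u ∈ s, Integrable (F u) μ) :
    eVariationOn (fun u => ∫ w, F u w ∂μ) s ≤ ∫⁻ w, eVariationOn (fun u => F u w) s ∂μ := by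
  refine iSup_le fun ⟨n, u, hu, us⟩ => ?_
  calc ∑ i ∈ Finset.range n, edist (∫ w, F (u (i + 1)) w ∂μ) (∫ w, F (u i) w ∂μ)
      = ∑ i ∈ Finset.range n, ‖∫ w, (F (u (i + 1)) w - F (u i) w) ∂μ‖ₑ := by
        simp only [edist_eq_enorm_sub, integral_sub (hF _ (us _)) (hF _ (us _))]
    _ ≤ ∑ i ∈ Finset.range n, ∫⁻ w, ‖F (u (i + 1)) w - F (u i) w‖ₑ ∂μ :=
        Finset.sum_le_sum fun i _ => enorm_integral_le_lintegral_enorm _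
    _ = ∫⁻ w, ∑ i ∈ Finset.range n, edist (F (u (i + 1)) w) (F (u i) w) ∂μ := by
        simp only [edist_eq_enorm_sub]
        exact (lintegral_finsetSum' _ fun i _ =>
          ((hF _ (us _)).sub (hF _ (us _))).aestronglyMeasurable.enorm).symm
    _ ≤ ∫⁻ w, eVariationOn (fun u => F u w) s ∂μ :=
        lintegral_mono fun w => eVariationOn.sum_le hu us

theorem eVariationOn_intervalIntegral_le {F : α → ℝ → E} {s : Set α} {a b : ℝ} (hab : a ≤ b)
    {V : ENNReal} (hF : ∀ u ∈ s, IntegrableOn (F u) (Ioc a b))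
    (hV : ∀ w ∈ Ioc a b, eVariationOn (fun u => F u w) s ≤ V) :
    eVariationOn (fun u => ∫ w in a..b, F u w) s ≤ V * ENNReal.ofReal (b - a) := by
  simp only [intervalIntegral.integral_of_le hab]
  calc _ ≤ ∫⁻ w in Ioc a b, eVariationOn (fun u => F u w) s := eVariationOn_integral_le hF
    _ ≤ ∫⁻ _ in Ioc a b, V := setLIntegral_mono measurable_const hV
    _ = V * ENNReal.ofReal (b - a) := by rw [setLIntegral_const, Real.volume_Ioc]

end Variation

theorem eVariationOn_indicator_le {S : Set ℝ} (hS : IsLowerSet S) {φ : ℝ → ℝ} {Λ M a b : ℝ}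
    (hΛ : 0 ≤ Λ) (hM : 0 ≤ M)
    (hφ : ∀ x ∈ S ∩ Icc a b, ∀ y ∈ S ∩ Icc a b, x ≤ y → |φ y - φ x| ≤ Λ * (y - x))
    (hφM : ∀ x ∈ S ∩ Icc a b, |φ x| ≤ M) :
    eVariationOn (S.indicator φ) (Icc a b) ≤ ENNReal.ofReal (Λ * (b - a) + M) := by
  -- A monotone majorant of the increments: drift `Λ` plus a jump `M` where `S` is left.
  set G : ℝ → ℝ := fun u => Λ * u + Sᶜ.indicator (fun _ => M) u
  have hG : Monotone G := by
    intro x y hxy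
    have : Sᶜ.indicator (fun _ => M) x ≤ Sᶜ.indicator (fun _ => M) y := by
      by_cases hy : y ∈ S
      · simp [hS hxy hy, hy]
      · by_cases hx : x ∈ S <;> simp [hx, hy, hM]
    simp only [G]
    gcongr
  calc eVariationOn (S.indicator φ) (Icc a b) ≤ eVariationOn G (Icc a b) := by
        refine eVariationOn_le_of_edist_le fun x hx y hy hxy => ?_
        rw [edist_dist, edist_dist, Real.dist_eq, Real.dist_eq,
          abs_of_nonneg (sub_nonneg.2 (hG hxy))]
        refine ENNReal.ofReal_le_ofReal ?_
        have hΛxy : 0 ≤ Λ * (y - x) := mul_nonneg hΛ (sub_nonneg.2 hxy)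
        by_cases hyS : y ∈ S
        · have hxS : x ∈ S := hS hxy hyS
          simpa [G, hxS, hyS, mul_sub] using hφ x ⟨hxS, hx⟩ y ⟨hyS, hy⟩ hxy
        · by_cases hxS : x ∈ S
          · rw [indicator_of_notMem hyS, indicator_of_mem hxS, zero_sub, abs_neg]
            simp only [G, indicator_of_mem (show y ∈ Sᶜ from hyS),
              indicator_of_notMem (show x ∉ Sᶜ from not_not.2 hxS)]
            linarith [hφM x ⟨hxS, hx⟩]
          · simpa [hxS, hyS] using sub_nonneg.2 (hG hxy)
    _ = ENNReal.ofReal (G b - G a) := by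
        simpa using (hG.monotoneOn univ).eVariationOn_eq (mem_univ a) (mem_univ b)
    _ ≤ ENNReal.ofReal (Λ * (b - a) + M) := by
        refine ENNReal.ofReal_le_ofReal ?_
        have h1 : Sᶜ.indicator (fun _ => M) b ≤ M := indicator_le_self' (fun _ _ => hM) b
        have h2 : 0 ≤ Sᶜ.indicator (fun _ => M) a := indicator_nonneg (fun _ _ => hM) a
        simp only [G]
        linarith

noncomputable def kernelProduct (K : ℝ → ℝ) (u v w : ℝ) : ℝ :=
  if 0 ≤ u ∧ u ≤ w ∧ 0 ≤ v ∧ v ≤ w then K (w - u) * K (w - v) else 0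

theorem abs_kernelProduct_mul_le {K : ℝ → ℝ} {MK q C : ℝ} (hKbd : ∀ x ≥ (0:ℝ), |K x| ≤ MK)
    (hq : 0 ≤ q) (hqC : q ≤ C) (u v w : ℝ) : |kernelProduct K u v w * q| ≤ MK ^ 2 * C := by
  have hMK : 0 ≤ MK := (abs_nonneg _).trans (hKbd 0 le_rfl)
  have hkP : |kernelProduct K u v w| ≤ MK ^ 2 := by
    unfold kernelProduct
    split_ifs with h
    · rw [abs_mul, sq]
      exact mul_le_mul (hKbd _ (sub_nonneg.2 h.2.1)) (hKbd _ (sub_nonneg.2 h.2.2.2))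
        (abs_nonneg _) hMK
    · simpa using sq_nonneg MK
  rw [abs_mul, abs_of_nonneg hq]
  exact mul_le_mul hkP hqC hq (sq_nonneg _)

theorem eVariationOn_kernelProduct_mul_le {K : ℝ → ℝ} {L : NNReal} {MK : ℝ}
    (hKLip : LipschitzOnWith L K (Ici 0)) (hKbd : ∀ x ≥ (0:ℝ), |K x| ≤ MK)
    {a b r q : ℝ} (ha : 0 ≤ a) (hr : 0 ≤ r) (hq : 0 ≤ q) (y m : ℝ) :
    eVariationOn (fun u => kernelProduct K (u * r) y m * q) (Icc a b)
      ≤ ENNReal.ofReal (q * MK * (L * r * (b - a) + MK)) := by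
  have hMK : 0 ≤ MK := (abs_nonneg _).trans (hKbd 0 le_rfl)
  set S := {u : ℝ | u * r ≤ m ∧ 0 ≤ y ∧ y ≤ m}
  have hS : IsLowerSet S := fun x x' hx'x hx =>
    ⟨(mul_le_mul_of_nonneg_right hx'x hr).trans hx.1, hx.2⟩
  have heq : EqOn (fun u => kernelProduct K (u * r) y m * q)
      (S.indicator fun u => K (m - u * r) * K (m - y) * q) (Icc a b) := by
    intro u hu
    have hur : 0 ≤ u * r := mul_nonneg (ha.trans hu.1) hr
    by_cases huS : u ∈ S
    · simp [kernelProduct, huS, hur, huS.1, huS.2]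
    · simp only [S, mem_ofPred_eq] at huS
      simp [kernelProduct, S, indicator, huS, hur]
  rw [eVariationOn.eq_of_eqOn heq,
    show q * MK * (L * r * (b - a) + MK) = L * r * (MK * q) * (b - a) + MK * (MK * q) by ring]
  refine eVariationOn_indicator_le hS (by positivity) (by positivity) ?_ ?_
  · rintro x ⟨⟨hxm, -, hym⟩, -⟩ x' ⟨⟨hx'm, -, -⟩, -⟩ hxx'
    have hlip := hKLip.dist_le_mul (m - x' * r) (sub_nonneg.2 hx'm) (m - x * r) (sub_nonneg.2 hxm)
    rw [Real.dist_eq, Real.dist_eq, show m - x' * r - (m - x * r) = -(r * (x' - x)) by ring,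
      abs_neg, abs_of_nonneg (mul_nonneg hr (sub_nonneg.2 hxx'))] at hlip
    calc |K (m - x' * r) * K (m - y) * q - K (m - x * r) * K (m - y) * q|
        = |K (m - x' * r) - K (m - x * r)| * (|K (m - y)| * q) := by
          rw [← sub_mul, ← sub_mul, abs_mul, abs_mul, abs_of_nonneg hq, mul_assoc]
      _ ≤ L * (r * (x' - x)) * (MK * q) := by
          gcongr
          exact hKbd _ (sub_nonneg.2 hym)
      _ = L * r * (MK * q) * (x' - x) := by ring
  · rintro x ⟨⟨hxm, -, hym⟩, -⟩
    rw [abs_mul, abs_mul, abs_of_nonneg hq, mul_assoc]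
    gcongr
    exacts [hKbd _ (sub_nonneg.2 hxm), hKbd _ (sub_nonneg.2 hym)]

section FloorDependence

variable {β : Type*} {f : ℝ → β} {t : ℝ}

theorem exists_eq_comp_floor (hf : ∀ w w', ⌊t * w⌋₊ = ⌊t * w'⌋₊ → f w = f w') :
    ∃ g : ℕ → β, ∀ w, f w = g ⌊t * w⌋₊ :=
  ⟨fun n => f (Function.invFun (fun w => ⌊t * w⌋₊) n),
    fun w => hf _ _ (Function.invFun_eq (f := fun w => ⌊t * w⌋₊) ⟨w, rfl⟩).symm⟩

theorem measurable_of_floor_eq [MeasurableSpace β]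
    (hf : ∀ w w', ⌊t * w⌋₊ = ⌊t * w'⌋₊ → f w = f w') : Measurable f := by
  obtain ⟨g, hg⟩ := exists_eq_comp_floor hf
  rw [funext hg]
  exact measurable_from_nat.comp (Nat.measurable_floor.comp (measurable_id.const_mul t))

end FloorDependence

theorem integrableOn_Ioc_of_floor_eq {f : ℝ → ℝ} {t a b M : ℝ}
    (hf : ∀ w w', ⌊t * w⌋₊ = ⌊t * w'⌋₊ → f w = f w') (hM : ∀ w ∈ Ioc a b, |f w| ≤ M) :
    IntegrableOn f (Ioc a b) :=
  Measure.integrableOn_of_bounded (by simp [Real.volume_Ioc])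
    (measurable_of_floor_eq hf).aestronglyMeasurable
    ((ae_restrict_iff' measurableSet_Ioc).2 (ae_of_all _ hM))

theorem floor_mul_eq_of_mem_Ioc {t s w : ℝ} (ht : 0 ≤ t) (hw : w ∈ Ioc (⌊t * s⌋₊ / t) s) :
    ⌊t * w⌋₊ = ⌊t * s⌋₊ := by
  refine le_antisymm (Nat.floor_mono (mul_le_mul_of_nonneg_left hw.2 ht)) (Nat.le_floor ?_)
  rcases ht.eq_or_lt with rfl | ht
  · simp
  · exact ((div_lt_iff₀' ht).1 hw.1).le

theorem exists_forall_inv_sq_le {N : ℕ → ℝ → ℝ}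
    (hN : ∀ (T : ℕ) w w', ⌊(T : ℝ) * w⌋₊ = ⌊(T : ℝ) * w'⌋₊ → N T w = N T w')
    {s₀ c : ℝ} {T₀ : ℕ} (hs₀ : s₀ ≤ 1) (hc : 0 < c)
    (hNc : ∀ T : ℕ, T₀ ≤ T → ∀ w ∈ Icc s₀ 1, c ≤ N T w) :
    ∃ C, 0 ≤ C ∧ ∀ T : ℕ, ∀ w ∈ Ioc ((⌊(T : ℝ) * s₀⌋₊ : ℝ) / T) 1, (N T w ^ 2)⁻¹ ≤ C := by
  choose g hg using fun T => exists_eq_comp_floor (hN T)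
  obtain ⟨C, hC⟩ :=
    ((Finset.range T₀ ×ˢ Finset.range T₀).image fun p => (g p.1 p.2 ^ 2)⁻¹).bddAbove
  refine ⟨max (c ^ 2)⁻¹ C, le_max_of_le_left (by positivity), fun T w hw => ?_⟩
  rcases lt_or_ge T T₀ with hT | hT
  · have hwT : ⌊(T : ℝ) * w⌋₊ ≤ T :=
      Nat.floor_le_of_le (mul_le_of_le_one_right T.cast_nonneg hw.2)
    rw [hg T w]
    refine le_max_of_le_right (hC (Finset.mem_coe.2
      (Finset.mem_image_of_mem (fun p : ℕ × ℕ => (g p.1 p.2 ^ 2)⁻¹) (a := (T, _)) ?_)))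
    simp only [Finset.mem_product, Finset.mem_range]
    exact ⟨hT, hwT.trans_lt hT⟩
  · have hcN : c ≤ N T w := by
      rcases le_or_gt s₀ w with hsw | hws
      · exact hNc T hT w ⟨hsw, hw.2⟩
      · rw [hN T w s₀ (floor_mul_eq_of_mem_Ioc T.cast_nonneg ⟨hw.1, hws.le⟩)]
        exact hNc T hT s₀ ⟨le_rfl, hs₀⟩
    exact le_max_of_le_left (inv_anti₀ (by positivity) (pow_le_pow_left₀ hc.le hcN 2))

theorem le_add_of_abs_sub_le_div {x ξ C₀ t : ℝ} (ht : 1 ≤ t) (h : |x - ξ| ≤ C₀ / t) :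
    x ≤ ξ + C₀ := by
  have hC₀ : 0 ≤ C₀ := by
    have := (abs_nonneg _).trans h
    rwa [le_div_iff₀ (by linarith), zero_mul] at this
  linarith [(abs_le.1 h).2, div_le_self hC₀ ht]

theorem stmt_5_general
    (γ s₀ ξ : ℝ) (hγ : γ ∈ Set.Ioo (0:ℝ) 1) (hs₀ : s₀ ∈ Set.Ioo γ 1)
    (K : ℝ → ℝ) (L : NNReal) (hKLip : LipschitzOnWith L K (Set.Ici 0))
    (MK : ℝ) (hKbd : ∀ x ≥ (0:ℝ), |K x| ≤ MK)
    (h : ℕ → ℝ) (hhpos : ∀ T : ℕ, 1 ≤ T → 0 < h T)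
    (C₀ : ℝ) (hrate : ∀ T : ℕ, 1 ≤ T → |(T : ℝ) / h T - ξ| ≤ C₀ / T)
    (D : ℝ → ℝ → ℝ → ℝ)
    (hD : ∀ u v w, D u v w =
      if 0 ≤ u ∧ u ≤ w ∧ 0 ≤ v ∧ v ≤ w then K (w - u) * K (w - v) else 0)
    (NT : ℕ → ℝ → ℝ)
    (hNT : ∀ (T : ℕ) (w : ℝ), NT T w =
      (∑ j ∈ Finset.Ico ⌊(T : ℝ) * γ⌋₊ ⌊(T : ℝ) * w⌋₊,
        K (((⌊(T : ℝ) * w⌋₊ : ℝ) - (j : ℝ)) / h T)) / T)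
    (gT : ℕ → ℝ → ℝ → ℝ → ℝ)
    (hgT : ∀ (T : ℕ) (v s u : ℝ), gT T v s u =
      ∫ w in ((⌊(T : ℝ) * s₀⌋₊ : ℝ) / T)..((⌊(T : ℝ) * s⌋₊ : ℝ) / T),
        D (u * T / h T) (v * T / h T) ((⌊(T : ℝ) * w⌋₊ : ℝ) / h T) * (NT T w ^ 2)⁻¹)
    (c : ℝ) (hc : 0 < c)
    (T₀ : ℕ) (hNTc : ∀ T : ℕ, T₀ ≤ T → ∀ w ∈ Set.Icc s₀ 1, c ≤ NT T w) :
    ∃ B : ℝ, ∀ T : ℕ, ∀ v ∈ Set.Icc γ 1, ∀ s ∈ Set.Icc s₀ 1,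
      eVariationOn (fun u => gT T v s u) (Set.Icc γ 1) ≤ ENNReal.ofReal B := by
  obtain rfl : D = kernelProduct K := funext fun u => funext fun v => funext (hD u v)
  have hfloor : ∀ (T : ℕ) w w', ⌊(T : ℝ) * w⌋₊ = ⌊(T : ℝ) * w'⌋₊ → NT T w = NT T w' :=
    fun T w w' hww' => by rw [hNT, hNT, hww']
  obtain ⟨Cq, hCq0, hCq⟩ := exists_forall_inv_sq_le hfloor hs₀.2.le hc hNTc
  have hMK : 0 ≤ MK := (abs_nonneg _).trans (hKbd 0 le_rfl)
  have hγ1 : 0 ≤ 1 - γ := sub_nonneg.2 hγ.2.le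
  refine ⟨Cq * MK * (L * (ξ + C₀) * (1 - γ) + MK), fun T v hv s hs => ?_⟩
  simp_rw [hgT, mul_div_assoc]
  rcases Nat.eq_zero_or_pos T with rfl | hT
  · simp only [CharP.cast_eq_zero, zero_mul, Nat.floor_zero, div_zero,
      intervalIntegral.integral_same]
    rw [eVariationOn.constant_on (subsingleton_singleton.anti (image_subset_iff.2 fun _ _ => rfl))]
    exact zero_le
  have hr : 0 ≤ (T : ℝ) / h T := (div_pos (Nat.cast_pos.2 hT) (hhpos T hT)).le
  have hrξ : (T : ℝ) / h T ≤ ξ + C₀ := le_add_of_abs_sub_le_div (Nat.one_le_cast.2 hT) (hrate T hT)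
  have hab : (⌊(T : ℝ) * s₀⌋₊ : ℝ) / T ≤ ⌊(T : ℝ) * s⌋₊ / T := by gcongr; exact hs.1
  have hb1 : (⌊(T : ℝ) * s⌋₊ : ℝ) / T ≤ 1 := by
    rw [div_le_one₀ (Nat.cast_pos.2 hT), Nat.cast_le]
    exact Nat.floor_le_of_le (mul_le_of_le_one_right T.cast_nonneg hs.2)
  set a := (⌊(T : ℝ) * s₀⌋₊ : ℝ) / T
  set b := (⌊(T : ℝ) * s⌋₊ : ℝ) / T
  have ha : 0 ≤ a := by positivity
  have hq : ∀ w ∈ Ioc a b, (NT T w ^ 2)⁻¹ ≤ Cq := fun w hw => hCq T w ⟨hw.1, hw.2.trans hb1⟩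
  calc _ ≤ ENNReal.ofReal (Cq * MK * (L * (ξ + C₀) * (1 - γ) + MK)) * ENNReal.ofReal (b - a) := by
        refine eVariationOn_intervalIntegral_le hab (fun u _ => ?_) (fun w hw => ?_)
        · refine integrableOn_Ioc_of_floor_eq (t := T) (M := MK ^ 2 * Cq)
            (fun w w' hww' => by rw [hfloor T w w' hww', hww'])
            (fun w hw => abs_kernelProduct_mul_le hKbd (by positivity) (hq w hw) _ _ _)
        · refine (eVariationOn_kernelProduct_mul_le hKLip hKbd hγ.1.le hr (by positivity)
            _ _).trans (ENNReal.ofReal_le_ofReal ?_)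
          gcongr
          exact hq w hw
    _ ≤ _ := mul_le_of_le_one_right' (ENNReal.ofReal_le_one.2 (by linarith))

/-- Uniformly bounded total variation of the functions `u ↦ g_T^{v,s}(u)` on `[γ,1]`, where
`g_T^{v,s}(u) = ∫_{⌊Ts₀⌋/T}^{⌊Ts⌋/T} D(uT/h, vT/h, ⌊Tw⌋/h) N_T(w)⁻² dw` with
`D(u,v,w) = K(w-u)K(w-v) 1{0 ≤ u,v ≤ w}` built from a Lipschitz, bounded, strictly positive
kernel `K`, a bandwidth satisfying `|T/h - ξ| ≤ C₀/T`, and the normalizer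
`N_T(w) = T⁻¹ ∑_{j=⌊Tγ⌋}^{⌊Tw⌋-1} K((⌊Tw⌋-j)/h)` assumed bounded below by `c > 0` on `[s₀,1]`
for all sufficiently large `T`. -/
theorem stmt_5
    (γ s₀ ξ : ℝ) (hγ : γ ∈ Set.Ioo (0:ℝ) 1) (hs₀ : s₀ ∈ Set.Ioo γ 1) (hξ : 0 < ξ)
    (K : ℝ → ℝ) (L : NNReal) (hKLip : LipschitzOnWith L K (Set.Ici 0))
    (MK : ℝ) (hKbd : ∀ x ≥ (0:ℝ), |K x| ≤ MK) (hKpos : ∀ x ≥ (0:ℝ), 0 < K x)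
    (h : ℕ → ℝ) (hhpos : ∀ T : ℕ, 1 ≤ T → 0 < h T)
    (C₀ : ℝ) (hrate : ∀ T : ℕ, 1 ≤ T → |(T : ℝ) / h T - ξ| ≤ C₀ / T)
    (D : ℝ → ℝ → ℝ → ℝ)
    (hD : ∀ u v w, D u v w =
      if 0 ≤ u ∧ u ≤ w ∧ 0 ≤ v ∧ v ≤ w then K (w - u) * K (w - v) else 0)
    (NT : ℕ → ℝ → ℝ)
    (hNT : ∀ (T : ℕ) (w : ℝ), NT T w =
      (∑ j ∈ Finset.Ico ⌊(T : ℝ) * γ⌋₊ ⌊(T : ℝ) * w⌋₊,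
        K (((⌊(T : ℝ) * w⌋₊ : ℝ) - (j : ℝ)) / h T)) / T)
    (gT : ℕ → ℝ → ℝ → ℝ → ℝ)
    (hgT : ∀ (T : ℕ) (v s u : ℝ), gT T v s u =
      ∫ w in ((⌊(T : ℝ) * s₀⌋₊ : ℝ) / T)..((⌊(T : ℝ) * s⌋₊ : ℝ) / T),
        D (u * T / h T) (v * T / h T) ((⌊(T : ℝ) * w⌋₊ : ℝ) / h T) * (NT T w ^ 2)⁻¹)
    (c : ℝ) (hc : 0 < c)
    (T₀ : ℕ) (hNTc : ∀ T : ℕ, T₀ ≤ T → ∀ w ∈ Set.Icc s₀ 1, c ≤ NT T w) :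
    ∃ B : ℝ, ∀ T : ℕ, ∀ v ∈ Set.Icc γ 1, ∀ s ∈ Set.Icc s₀ 1,
      eVariationOn (fun u => gT T v s u) (Set.Icc γ 1) ≤ ENNReal.ofReal B :=
  stmt_5_general γ s₀ ξ hγ hs₀ K L hKLip MK hKbd h hhpos C₀ hrate D hD NT hNT gT hgT c hc T₀ hNTc
end

section
/- (Anscombe's random-index theorem, general form.) Let (Z_n)_{n≥1} be real-valued random variables on a probability space (Ω, F, P) such that Z_n converges in distribution to a real-valued random variable Z as n → ∞, and suppose (Z_n) is uniformly continuous in probability: for every ε > 0 there exist δ > 0 and n₀ ∈ ℕ such that for all n ≥ n₀, P( max_{k : |k − n| < nδ} |Z_k − Z_n| > ε ) < ε. Let (τ_a)_{a>0} be a family of random variables taking values in the positive integers such that τ_a / a → λ in probability as a → ∞, for some constant λ ∈ (0, ∞). Then Z_{τ_a} converges in distribution to Z as a → ∞. -/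
/-!
Put `n(a) = ⌈λ a⌉`. Since `n(a) → ∞`, `Z_{n(a)} → Z` in distribution. For `δ` given by uniform
continuity in probability, off the event `|τ_a / a - λ| ≥ λ δ / 2`, whose probability tends to `0`,
the random index `τ_a` lies in the window `|k - n(a)| < n(a) δ` once `a` is large, so
`Z_{τ_a} - Z_{n(a)}` is small in probability. Slutsky's lemma
(`tendstoInDistribution_of_tendstoInMeasure_sub`) then transfers the limit to `Z_{τ_a}`.
-/

open MeasureTheory Filter Topology BoundedContinuousFunction

section

variable {Ω : Type*} [MeasurableSpace Ω]

lemma measurable_apply_randomIndex {E : Type*} [MeasurableSpace E] {Z : ℕ → Ω → E}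
    (hZ : ∀ n, Measurable (Z n)) {σ : Ω → ℕ} (hσ : Measurable σ) :
    Measurable fun ω => Z (σ ω) ω :=
  (measurable_from_prod_countable_left (f := fun p : Ω × ℕ => Z p.2 p.1) hZ).comp
    (measurable_id.prodMk hσ)

namespace MeasureTheory

variable {ι κ E Ω' : Type*} [TopologicalSpace E] [MeasurableSpace E] [OpensMeasurableSpace E]
  [MeasurableSpace Ω'] {μ : Measure Ω} [IsProbabilityMeasure μ]
  {μ' : Measure Ω'} [IsProbabilityMeasure μ'] {X : ι → Ω → E} {Z : Ω' → E} {l : Filter ι}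

lemma TendstoInDistribution.tendsto_integral (h : TendstoInDistribution X l Z (fun _ => μ) μ')
    (f : E →ᵇ ℝ) :
    Tendsto (fun i => ∫ ω, f (X i ω) ∂μ) l (𝓝 (∫ ω, f (Z ω) ∂μ')) := by
  have := ProbabilityMeasure.tendsto_iff_forall_integral_tendsto.1 h.tendsto f
  simp only [ProbabilityMeasure.coe_mk] at this
  rw [integral_map h.aemeasurable_limit f.continuous.aestronglyMeasurable] at this
  convert this using 2 with i
  exact (integral_map (h.forall_aemeasurable i) f.continuous.aestronglyMeasurable).symm

lemma tendstoInDistribution_of_forall_tendsto_integral (hX : ∀ i, AEMeasurable (X i) μ)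
    (hZ : AEMeasurable Z μ')
    (h : ∀ f : E →ᵇ ℝ, Tendsto (fun i => ∫ ω, f (X i ω) ∂μ) l (𝓝 (∫ ω, f (Z ω) ∂μ'))) :
    TendstoInDistribution X l Z (fun _ => μ) μ' where
  forall_aemeasurable := hX
  aemeasurable_limit := hZ
  tendsto := by
    refine ProbabilityMeasure.tendsto_iff_forall_integral_tendsto.2 fun f => ?_
    simp only [ProbabilityMeasure.coe_mk]
    rw [integral_map hZ f.continuous.aestronglyMeasurable]
    convert h f using 2 with i
    exact integral_map (hX i) f.continuous.aestronglyMeasurable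

lemma TendstoInDistribution.comp_tendsto {l' : Filter κ} {φ : κ → ι}
    (h : TendstoInDistribution X l Z (fun _ => μ) μ') (hφ : Tendsto φ l' l) :
    TendstoInDistribution (fun k => X (φ k)) l' Z (fun _ => μ) μ' where
  forall_aemeasurable k := h.forall_aemeasurable (φ k)
  aemeasurable_limit := h.aemeasurable_limit
  tendsto := h.tendsto.comp hφ

end MeasureTheory

section RandomIndex

variable {E : Type*} [SeminormedAddCommGroup E]

def UniformlyContinuousInProbability (μ : Measure Ω) (Z : ℕ → Ω → E) : Prop :=
  ∀ ε > (0 : ℝ), ∃ δ > (0 : ℝ), ∃ n₀ : ℕ, ∀ n : ℕ, n₀ ≤ n →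
    μ {ω | ∃ k : ℕ, |(k : ℝ) - n| < n * δ ∧ ε < ‖Z k ω - Z n ω‖} < ENNReal.ofReal ε

lemma tendstoInMeasure_of_tendsto_measure_lt_norm_sub {ι : Type*} {μ : Measure Ω}
    {f : ι → Ω → E} {g : Ω → E} {l : Filter ι}
    (h : ∀ ε > (0 : ℝ), Tendsto (fun i => μ {ω | ε < ‖f i ω - g ω‖}) l (𝓝 0)) :
    TendstoInMeasure μ f l g := by
  refine tendstoInMeasure_iff_norm.2 fun ε hε => ?_
  refine tendsto_of_tendsto_of_tendsto_of_le_of_le tendsto_const_nhds (h (ε / 2) (half_pos hε))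
    (fun _ => bot_le) fun i => measure_mono fun ω hω => ?_
  exact (half_lt_self hε).trans_le hω

lemma tendsto_natCeil_const_mul_atTop {lam : ℝ} (hlam : 0 < lam) :
    Tendsto (fun a : ℝ => ⌈lam * a⌉₊) atTop atTop :=
  tendsto_nat_ceil_atTop.comp (tendsto_id.const_mul_atTop hlam)

lemma abs_sub_natCeil_lt_of_abs_div_sub_lt {t a lam δ : ℝ} (ha : 0 < a) (hlam : 0 < lam)
    (hδ : 2 ≤ lam * a * δ) (ht : |t / a - lam| < lam * δ / 2) :
    |t - ⌈lam * a⌉₊| < ⌈lam * a⌉₊ * δ := by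
  have hδ0 : 0 < δ := pos_of_mul_pos_right (a := lam * a) (by linarith) (by positivity)
  have hceil : lam * a ≤ ⌈lam * a⌉₊ := Nat.le_ceil _
  have hceil' : (⌈lam * a⌉₊ : ℝ) < lam * a + 1 := Nat.ceil_lt_add_one (by positivity)
  have hta : |t - lam * a| < lam * a * δ / 2 := by
    have : t - lam * a = (t / a - lam) * a := by field_simp
    rw [this, abs_mul, abs_of_pos ha]
    nlinarith
  rw [abs_lt] at hta ⊢
  constructor <;> nlinarith

theorem UniformlyContinuousInProbability.tendstoInMeasure_sub_natCeil {μ : Measure Ω}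
    [IsFiniteMeasure μ] {Z : ℕ → Ω → E} (hZ : UniformlyContinuousInProbability μ Z)
    {τ : ℝ → Ω → ℕ} {lam : ℝ} (hlam : 0 < lam)
    (hτ : TendstoInMeasure μ (fun a ω => (τ a ω : ℝ) / a) atTop fun _ => lam) :
    TendstoInMeasure μ (fun a ω => Z (τ a ω) ω - Z ⌈lam * a⌉₊ ω) atTop 0 := by
  rw [tendstoInMeasure_iff_measureReal_norm] at hτ ⊢
  simp only [Pi.zero_apply, sub_zero]
  intro ε hε
  refine Metric.tendsto_nhds.2 fun η hη => ?_
  obtain ⟨δ, hδ, n₀, hn₀⟩ := hZ (min (ε / 2) (η / 2)) (by positivity)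
  filter_upwards [(tendsto_natCeil_const_mul_atTop hlam).eventually_ge_atTop n₀,
    eventually_ge_atTop (2 / (lam * δ)), eventually_gt_atTop 0,
    (hτ (lam * δ / 2) (by positivity)).eventually_lt_const (half_pos hη)]
    with a hn₀a ha ha0 hτa
  set W := {ω | ∃ k : ℕ, |(k : ℝ) - ⌈lam * a⌉₊| < ⌈lam * a⌉₊ * δ ∧
    min (ε / 2) (η / 2) < ‖Z k ω - Z ⌈lam * a⌉₊ ω‖}
  have hW : μ.real W < η / 2 :=
    (ENNReal.toReal_lt_of_lt_ofReal (hn₀ _ hn₀a)).trans_le (min_le_right _ _)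
  have hsub : {ω | ε ≤ ‖Z (τ a ω) ω - Z ⌈lam * a⌉₊ ω‖} ⊆
      {ω | lam * δ / 2 ≤ ‖(τ a ω : ℝ) / a - lam‖} ∪ W := by
    intro ω hω
    by_contra hout
    simp only [Set.mem_union, Set.mem_ofPred_eq, not_or, not_le, Real.norm_eq_abs] at hout
    refine hout.2 ⟨τ a ω, abs_sub_natCeil_lt_of_abs_div_sub_lt ha0 hlam ?_ hout.1, ?_⟩
    · rw [div_le_iff₀ (by positivity)] at ha
      linarith
    · exact (min_le_left _ _).trans_lt ((half_lt_self hε).trans_le hω)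
  rw [Real.dist_0_eq_abs, abs_of_nonneg measureReal_nonneg]
  calc _ ≤ _ := measureReal_mono hsub
    _ ≤ _ := measureReal_union_le _ _
    _ < η / 2 + η / 2 := add_lt_add hτa hW
    _ = η := add_halves η

end RandomIndex

end

theorem stmt_8_general
    {Ω : Type*} [MeasurableSpace Ω] (μ : Measure Ω) [IsProbabilityMeasure μ]
    (Z : ℕ → Ω → ℝ) (Zlim : Ω → ℝ)
    (hZmeas : ∀ n, Measurable (Z n)) (hZlimmeas : Measurable Zlim)
    (hZconv : ∀ f : BoundedContinuousFunction ℝ ℝ,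
      Filter.Tendsto (fun n : ℕ => ∫ ω, f (Z n ω) ∂μ) Filter.atTop
        (nhds (∫ ω, f (Zlim ω) ∂μ)))
    (hucip : ∀ ε > (0:ℝ), ∃ δ > (0:ℝ), ∃ n₀ : ℕ, ∀ n : ℕ, n₀ ≤ n →
      μ {ω | ∃ k : ℕ, |(k : ℝ) - (n : ℝ)| < (n : ℝ) * δ ∧ ε < |Z k ω - Z n ω|}
        < ENNReal.ofReal ε)
    (τ : ℝ → Ω → ℕ) (hτmeas : ∀ a, Measurable (τ a))
    (lam : ℝ) (hlam : 0 < lam)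
    (hτconv : ∀ ε > (0:ℝ),
      Filter.Tendsto (fun a : ℝ => μ {ω | ε < |((τ a ω : ℝ)) / a - lam|})
        Filter.atTop (nhds 0)) :
    ∀ f : BoundedContinuousFunction ℝ ℝ,
      Filter.Tendsto (fun a : ℝ => ∫ ω, f (Z (τ a ω) ω) ∂μ) Filter.atTop
        (nhds (∫ ω, f (Zlim ω) ∂μ)) := by
  have hZ : TendstoInDistribution Z atTop Zlim (fun _ => μ) μ :=
    tendstoInDistribution_of_forall_tendsto_integral (fun n => (hZmeas n).aemeasurable)
      hZlimmeas.aemeasurable hZconv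
  have hZuc : UniformlyContinuousInProbability μ Z := hucip
  have hdiff : TendstoInMeasure μ (fun a ω => Z (τ a ω) ω - Z ⌈lam * a⌉₊ ω) atTop 0 :=
    hZuc.tendstoInMeasure_sub_natCeil hlam
      (tendstoInMeasure_of_tendsto_measure_lt_norm_sub hτconv)
  have hZτ : ∀ a, AEMeasurable (fun ω => Z (τ a ω) ω) μ := fun a =>
    (measurable_apply_randomIndex hZmeas (hτmeas a)).aemeasurable
  exact (tendstoInDistribution_of_tendstoInMeasure_sub _ Zlim
    (hZ.comp_tendsto (tendsto_natCeil_const_mul_atTop hlam)) hdiff hZτ).tendsto_integral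

/-- Anscombe's random-index theorem (general form): if `Z_n → Z` in distribution, `(Z_n)` is
uniformly continuous in probability, and the positive-integer-valued random indices `τ_a`
satisfy `τ_a/a → λ` in probability as `a → ∞` for a constant `λ ∈ (0,∞)`, then
`Z_{τ_a} → Z` in distribution as `a → ∞`. Convergence in distribution is expressed via
integrals of bounded continuous functions. -/
theorem stmt_8
    {Ω : Type*} [MeasurableSpace Ω] (μ : Measure Ω) [IsProbabilityMeasure μ]
    (Z : ℕ → Ω → ℝ) (Zlim : Ω → ℝ)
    (hZmeas : ∀ n, Measurable (Z n)) (hZlimmeas : Measurable Zlim)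
    (hZconv : ∀ f : BoundedContinuousFunction ℝ ℝ,
      Filter.Tendsto (fun n : ℕ => ∫ ω, f (Z n ω) ∂μ) Filter.atTop
        (nhds (∫ ω, f (Zlim ω) ∂μ)))
    (hucip : ∀ ε > (0:ℝ), ∃ δ > (0:ℝ), ∃ n₀ : ℕ, ∀ n : ℕ, n₀ ≤ n →
      μ {ω | ∃ k : ℕ, |(k : ℝ) - (n : ℝ)| < (n : ℝ) * δ ∧ ε < |Z k ω - Z n ω|}
        < ENNReal.ofReal ε)
    (τ : ℝ → Ω → ℕ) (hτmeas : ∀ a, Measurable (τ a))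
    (hτpos : ∀ a > (0:ℝ), ∀ ω, 1 ≤ τ a ω)
    (lam : ℝ) (hlam : 0 < lam)
    (hτconv : ∀ ε > (0:ℝ),
      Filter.Tendsto (fun a : ℝ => μ {ω | ε < |((τ a ω : ℝ)) / a - lam|})
        Filter.atTop (nhds 0)) :
    ∀ f : BoundedContinuousFunction ℝ ℝ,
      Filter.Tendsto (fun a : ℝ => ∫ ω, f (Z (τ a ω) ω) ∂μ) Filter.atTop
        (nhds (∫ ω, f (Zlim ω) ∂μ)) :=
  stmt_8_general μ Z Zlim hZmeas hZlimmeas hZconv hucip τ hτmeas lam hlam hτconv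
end
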